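/- Let b ≥ 2, ℓ ≥ 1, m = b^{ℓ+1}, G = {n ∈ [0,m) : ⌊n/b^ℓ⌋ = n mod b}, and define S(a) = -1 - ⌊a/b⌋ + Σ_{n ∈ G}(⌊(n+1)a/m⌋ - ⌊na/m⌋). For every a coprime to m with 1 ≤ a ≤ m-1, S(a) + S(m-a) = -1. -/

import Mathlib

/-!
Write `m = b ^ (ℓ + 1)` and `f k = ⌊k a / m⌋ + ⌊k (m - a) / m⌋`. Since `a` is coprime to `m`,
`m ∣ k a` only when `m ∣ k`, so `f k = k - 1` for `0 < k < m` while `f 0 = 0` and `f m = m`.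
Summing the two `S`-sums termwise therefore gives `∑_{n ∈ G} (f (n + 1) - f n) = #G`, because
`G` contains both `0` and `m - 1` and every other increment is `1`; and `#G = b ^ ℓ`. The same
floor identity gives `⌊a / b⌋ + ⌊(m - a) / b⌋ = b ^ ℓ - 1`, as `b ∤ a`. Hence
`S a + S (m - a) = -2 - (b ^ ℓ - 1) + b ^ ℓ = -1`.
-/

open Finset

theorem Int.ediv_add_sub_ediv {c : ℤ} (hc : 0 < c) (x N : ℤ) :
    x / c + (c * N - x) / c = N - if c ∣ x then 0 else 1 := by
  rw [sub_eq_neg_add, Int.add_mul_ediv_left _ _ hc.ne', Int.neg_ediv, Int.sign_eq_one_of_pos hc]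
  ring

theorem Nat.cast_div_add_cast_sub_div {c x : ℕ} (N : ℕ) (hc : 0 < c) (hx : x ≤ c * N) :
    ((x / c : ℕ) : ℤ) + ((c * N - x) / c : ℕ) = N - if c ∣ x then 0 else 1 := by
  push_cast [Nat.cast_sub hx]
  rw [Int.ediv_add_sub_ediv (by exact_mod_cast hc)]
  simp only [Int.natCast_dvd_natCast]

theorem Nat.cast_mul_div_add_mul_sub_div {a m : ℕ} (hcop : a.Coprime m) (ha : a ≤ m) (k : ℕ) :
    ((k * a / m : ℕ) : ℤ) + ((k * (m - a) / m : ℕ) : ℤ) = k - if m ∣ k then 0 else 1 := by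
  have hm : 0 < m := Nat.pos_of_ne_zero (by rintro rfl; simp_all)
  rw [Nat.mul_sub, mul_comm k m, Nat.cast_div_add_cast_sub_div k hm (by rw [mul_comm]; gcongr)]
  simp only [hcop.symm.dvd_mul_right]

theorem sum_floor_increments_add_reflect {a m : ℕ} (hcop : a.Coprime m) (ha : a ≤ m)
    {s : Finset ℕ} (hs : s ⊆ range m) (h0 : 0 ∈ s) (hlast : m - 1 ∈ s) :
    ∑ n ∈ s, ((((n + 1) * a / m : ℕ) - (n * a / m : ℕ) : ℤ)
      + (((n + 1) * (m - a) / m : ℕ) - (n * (m - a) / m : ℕ) : ℤ)) = #s := by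
  have step : ∀ n ∈ s, ((((n + 1) * a / m : ℕ) - (n * a / m : ℕ) : ℤ)
      + (((n + 1) * (m - a) / m : ℕ) - (n * (m - a) / m : ℕ) : ℤ))
      = 1 + (if n = m - 1 then 1 else 0) - (if n = 0 then 1 else 0) := by
    intro n hn
    have hnm : n < m := mem_range.mp (hs hn)
    have hsucc := Nat.cast_mul_div_add_mul_sub_div hcop ha (n + 1)
    have hcurr := Nat.cast_mul_div_add_mul_sub_div hcop ha n
    have hdvd_succ : m ∣ n + 1 ↔ n = m - 1 :=
      ⟨fun h => by have := Nat.le_of_dvd n.succ_pos h; omega,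
        fun h => by rw [h, Nat.sub_add_cancel (by omega)]⟩
    have hdvd : m ∣ n ↔ n = 0 :=
      ⟨fun h => Nat.eq_zero_of_dvd_of_lt h hnm, fun h => h ▸ dvd_zero m⟩
    simp only [hdvd_succ, hdvd] at hsucc hcurr
    rw [Nat.cast_succ] at hsucc
    split_ifs at hsucc hcurr ⊢ <;> linarith
  rw [sum_congr rfl step, sum_sub_distrib, sum_add_distrib, sum_ite_eq', sum_ite_eq', if_pos h0,
    if_pos hlast]
  simp

def goodSlices (M b : ℕ) : Finset ℕ := (range (M * b)).filter fun n => n / M = n % b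

theorem mem_goodSlices {M b n : ℕ} : n ∈ goodSlices M b ↔ n < M * b ∧ n / M = n % b := by
  rw [goodSlices, mem_filter, mem_range]

theorem card_goodSlices {M b : ℕ} (hbM : b ∣ M) : #(goodSlices M b) = M := by
  obtain ⟨K, rfl⟩ := hbM
  have digit {q r : ℕ} (hr : r < b) : (b * q + r) / b = q ∧ (b * q + r) % b = r := by
    have hb : 0 < b := by omega
    rw [Nat.mul_add_div hb, Nat.div_eq_of_lt hr, Nat.mul_add_mod, Nat.mod_eq_of_lt hr]
    simp
  conv_rhs => rw [← card_range (b * K)]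
  -- dropping the last digit is inverted by appending the leading digit `q / K` of `q`
  refine card_nbij' (· / b) (fun q => b * q + q / K) (fun n hn => ?_) (fun q hq => ?_)
    (fun n hn => ?_) (fun q hq => ?_)
  · rw [mem_coe, mem_goodSlices] at hn
    exact mem_range.mpr (Nat.div_lt_of_lt_mul (by linarith [hn.1]))
  · rw [mem_coe, mem_range] at hq
    have hd : q / K < b := Nat.div_lt_of_lt_mul (by linarith)
    obtain ⟨hdiv, hmod⟩ := digit (q := q) hd
    rw [mem_coe, mem_goodSlices, ← Nat.div_div_eq_div_mul, hdiv, hmod]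
    refine ⟨?_, rfl⟩
    have : q / K + 1 ≤ b := hd
    nlinarith
  · rw [mem_coe, mem_goodSlices, ← Nat.div_div_eq_div_mul] at hn
    simp only
    rw [hn.2, Nat.div_add_mod]
  · rw [mem_coe, mem_range] at hq
    exact (digit (Nat.div_lt_of_lt_mul (by linarith))).1

theorem zero_mem_goodSlices {M b : ℕ} (hM : 0 < M) (hb : 0 < b) : 0 ∈ goodSlices M b :=
  mem_goodSlices.mpr ⟨Nat.mul_pos hM hb, by simp⟩

theorem sub_one_mem_goodSlices {M b : ℕ} (hM : 0 < M) (hb : 0 < b) :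
    M * b - 1 ∈ goodSlices M b := by
  obtain ⟨M, rfl⟩ : ∃ M', M = M' + 1 := ⟨M - 1, by omega⟩
  obtain ⟨b, rfl⟩ : ∃ b', b = b' + 1 := ⟨b - 1, by omega⟩
  have e : (M + 1) * (b + 1) - 1 = (b + 1) * M + b := Nat.sub_eq_of_eq_add (by ring)
  rw [mem_goodSlices, e, Nat.mul_add_mod, Nat.mod_eq_of_lt (by omega),
    Nat.div_eq_of_lt_le (k := b) (by ring_nf; omega) (by ring_nf; omega)]
  exact ⟨by ring_nf; omega, rfl⟩

theorem reflection_identity_general (b ℓ a : ℕ) (hb : 2 ≤ b) (hℓ : 1 ≤ ℓ)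
    (ha2 : a ≤ b ^ (ℓ + 1) - 1)
    (hcop : Nat.gcd a (b ^ (ℓ + 1)) = 1) :
    (fun x : ℕ => -1 - (x / b : ℕ)
        + ∑ n ∈ (Finset.range (b ^ (ℓ + 1))).filter (fun n => n / b ^ ℓ = n % b),
          (((n + 1) * x / b ^ (ℓ + 1) : ℕ) - (n * x / b ^ (ℓ + 1) : ℕ) : ℤ)) a
      + (fun x : ℕ => -1 - (x / b : ℕ)
        + ∑ n ∈ (Finset.range (b ^ (ℓ + 1))).filter (fun n => n / b ^ ℓ = n % b),
          (((n + 1) * x / b ^ (ℓ + 1) : ℕ) - (n * x / b ^ (ℓ + 1) : ℕ) : ℤ))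
        (b ^ (ℓ + 1) - a) = -1 := by
  have hm : b ^ (ℓ + 1) = b ^ ℓ * b := pow_succ b ℓ
  have hM : 0 < b ^ ℓ := by positivity
  have hcop : a.Coprime (b ^ (ℓ + 1)) := hcop
  have ha : a ≤ b ^ (ℓ + 1) := by omega
  have hsum := sum_floor_increments_add_reflect hcop ha (s := goodSlices (b ^ ℓ) b)
    (hm ▸ filter_subset _ _) (zero_mem_goodSlices hM (by omega))
    (hm ▸ sub_one_mem_goodSlices hM (by omega))
  rw [card_goodSlices (dvd_pow_self b (by omega)), sum_add_distrib] at hsum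
  have hba : ¬ b ∣ a := fun h => by
    have := Nat.eq_one_of_dvd_coprimes hcop h (dvd_pow_self b (by omega))
    omega
  have hdigits := Nat.cast_div_add_cast_sub_div (b ^ ℓ) (c := b) (x := a) (by omega)
    (by rwa [mul_comm, ← hm])
  rw [if_neg hba, mul_comm, ← hm] at hdigits
  simp only [goodSlices, ← hm] at hsum ⊢
  linarith

theorem reflection_identity (b ℓ a : ℕ) (hb : 2 ≤ b) (hℓ : 1 ≤ ℓ)
    (ha1 : 1 ≤ a) (ha2 : a ≤ b ^ (ℓ + 1) - 1)
    (hcop : Nat.gcd a (b ^ (ℓ + 1)) = 1) :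
    (fun x : ℕ => -1 - (x / b : ℕ)
        + ∑ n ∈ (Finset.range (b ^ (ℓ + 1))).filter (fun n => n / b ^ ℓ = n % b),
          (((n + 1) * x / b ^ (ℓ + 1) : ℕ) - (n * x / b ^ (ℓ + 1) : ℕ) : ℤ)) a
      + (fun x : ℕ => -1 - (x / b : ℕ)
        + ∑ n ∈ (Finset.range (b ^ (ℓ + 1))).filter (fun n => n / b ^ ℓ = n % b),
          (((n + 1) * x / b ^ (ℓ + 1) : ℕ) - (n * x / b ^ (ℓ + 1) : ℕ) : ℤ))
        (b ^ (ℓ + 1) - a) = -1 :=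
  reflection_identity_general b ℓ a hb hℓ ha2 hcop
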